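/- Let X̃ ⊆ P^{r+1} be a smooth rational normal scroll of codimension at least 2 and let p ∈ Sec(X̃) \ X̃ be a closed point with Sec_p(X̃) = P^{t−1} for some t ≥ 3. Then the hyperquadric Σ_p(X̃) ⊆ P^{t−1} is not a double linear space; that is, there is no linear subspace E ⊆ P^{t−1} of dimension t−2 with Σ_p(X̃) = 2E. -/

import Mathlib

/-!
Common framework: projective space over an algebraically closed field, linear
subspaces, Zariski closure, tangent spaces, secant cones and secant loci,
rational normal scrolls (possibly cones) and their distinguished subvarieties.
-/

open Projectivization MvPolynomial

noncomputable section

namespace SecantLoci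

/-- Projective `N`-space over `K`, with homogeneous coordinates indexed by `Fin (N+1)`. -/
abbrev PS (K : Type*) [Field K] (N : ℕ) := Projectivization K (Fin (N + 1) → K)

variable {K : Type*} [Field K] {N : ℕ}

/-- The affine cone over a set of projective points (it contains `0`). -/
def cone (S : Set (PS K N)) : Set (Fin (N + 1) → K) :=
  { v | ∀ hv : v ≠ 0, Projectivization.mk K v hv ∈ S }

/-- The set of projective points lying in the projectivization of a linear subspace `W`. -/
def linSet (W : Submodule K (Fin (N + 1) → K)) : Set (PS K N) :=
  { x | x.submodule ≤ W }

/-- `S` is a projective linear subspace of (projective) dimension `d`. -/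
def IsLinearOfDim (S : Set (PS K N)) (d : ℕ) : Prop :=
  ∃ W : Submodule K (Fin (N + 1) → K), Module.finrank K W = d + 1 ∧ S = linSet W

/-- The projective linear span of a set of projective points. -/
def projSpan (S : Set (PS K N)) : Set (PS K N) :=
  linSet (⨆ x ∈ S, x.submodule)

/-- The line through two points (the span of the pair). -/
def lineThrough (p q : PS K N) : Set (PS K N) := projSpan {p, q}

def IsLine (S : Set (PS K N)) : Prop := IsLinearOfDim S 1

def IsPlane (S : Set (PS K N)) : Prop := IsLinearOfDim S 2

/-- The polynomials vanishing on the affine cone over `S`. -/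
def vanishing (S : Set (PS K N)) : Set (MvPolynomial (Fin (N + 1)) K) :=
  { f | ∀ v ∈ cone S, eval v f = 0 }

/-- The Zariski closure of a set of projective points. -/
def zcl (S : Set (PS K N)) : Set (PS K N) :=
  { x | ∀ f ∈ vanishing S, eval x.rep f = 0 }

def IsZClosed (S : Set (PS K N)) : Prop := zcl S = S

/-- Irreducibility with respect to Zariski closed sets. -/
def IsIrred (S : Set (PS K N)) : Prop :=
  S.Nonempty ∧ ∀ A B : Set (PS K N),
    IsZClosed A → IsZClosed B → S ⊆ A ∪ B → S ⊆ A ∨ S ⊆ B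

/-- `dimGE S k` : the (Zariski) dimension of `S` is at least `k`, i.e. there is a
strictly increasing chain of `k+1` nonempty irreducible closed subsets of the closure of `S`. -/
def dimGE (S : Set (PS K N)) (k : ℕ) : Prop :=
  ∃ c : Fin (k + 1) → Set (PS K N), StrictMono c ∧
    (∀ i, IsZClosed (c i) ∧ IsIrred (c i)) ∧ c (Fin.last k) ⊆ zcl S

/-- The embedded join of two sets: the Zariski closure of the union of all lines
joining a point of `Y` to a point of `Z` (together with `Y` and `Z` themselves). -/
def join (Y Z : Set (PS K N)) : Set (PS K N) :=
  zcl (Y ∪ Z ∪ ⋃ y ∈ Y, ⋃ z ∈ Z, lineThrough y z)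

/-- The (projective) Zariski tangent space of `X` at `q`: the projectivization of the
kernel of the linear parts at `q` of all polynomials vanishing on the cone over `X`. -/
def tangentSpace (X : Set (PS K N)) (q : PS K N) : Set (PS K N) :=
  { x | ∀ f ∈ vanishing X, ∑ i, x.rep i * eval q.rep (pderiv i f) = 0 }

/-- A line `L` is a secant line of `X` when it meets `X` in a scheme of length at least 2:
equivalently, it meets `X` in two distinct points, or it is tangent to `X` at some point. -/
def IsSecantLine (X L : Set (PS K N)) : Prop :=
  IsLine L ∧
    ((∃ x ∈ X ∩ L, ∃ y ∈ X ∩ L, x ≠ y) ∨ ∃ q ∈ X ∩ L, L ⊆ tangentSpace X q)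

/-- The secant cone `Sec_p(X)`: the union of all secant lines of `X` through `p`
(just `{p}` if there is no such line). -/
def secCone (X : Set (PS K N)) (p : PS K N) : Set (PS K N) :=
  {p} ∪ ⋃ L ∈ { L | IsSecantLine X L ∧ p ∈ L }, L

/-- The secant locus `Σ_p(X)` (as a set: the support of the scheme-theoretic
intersection of `X` with the secant cone). -/
def secLocus (X : Set (PS K N)) (p : PS K N) : Set (PS K N) :=
  X ∩ secCone X p

/-- The secant variety: the Zariski closure of the union of all chords of `X`. -/
def secVariety (X : Set (PS K N)) : Set (PS K N) :=
  zcl (⋃ x ∈ X, ⋃ y ∈ X, ⋃ _ : x ≠ y, lineThrough x y)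

/-- The tangent variety: the Zariski closure of the union of all tangent spaces of `X`. -/
def tanVariety (X : Set (PS K N)) : Set (PS K N) :=
  zcl (⋃ q ∈ X, tangentSpace X q)

/-- `S` is a smooth plane conic: the image of `ℙ¹` under a degree-2 Veronese map into
the plane spanned by three linearly independent vectors. -/
def IsSmoothConic (S : Set (PS K N)) : Prop :=
  ∃ v : Fin 3 → (Fin (N + 1) → K), LinearIndependent K v ∧
    S = { x | ∃ s t : K, (s, t) ≠ (0, 0) ∧
      x.submodule = Submodule.span K {s ^ 2 • v 0 + (s * t) • v 1 + t ^ 2 • v 2} }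

/-- `S` is a smooth quadric surface (in the 3-space spanned by four independent vectors):
the image of `ℙ¹ × ℙ¹` under a Segre map. -/
def IsSmoothQuadricSurface (S : Set (PS K N)) : Prop :=
  ∃ v : Fin 2 → Fin 2 → (Fin (N + 1) → K),
    LinearIndependent K (fun q : Fin 2 × Fin 2 => v q.1 q.2) ∧
    S = { x | ∃ b c : Fin 2 → K, b ≠ 0 ∧ c ≠ 0 ∧
      x.submodule = Submodule.span K {∑ i, ∑ j, (b i * c j) • v i j} }

/-- The data of a smooth rational normal scroll of type `(a 0, …, a (n-1))` in `ℙ^N`: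
a family of linearly independent vectors `v i j`, `0 ≤ j ≤ a i`, giving the rational
normal curve directrices of the scroll. -/
structure ScrollData (K : Type*) [Field K] (N n : ℕ) (a : Fin n → ℕ) where
  v : (i : Fin n) → Fin (a i + 1) → (Fin (N + 1) → K)
  indep : LinearIndependent K fun q : (i : Fin n) × Fin (a i + 1) => v q.1 q.2

namespace ScrollData

variable {n : ℕ} {a : Fin n → ℕ}

/-- The point of the `i`-th directrix curve over the parameter `(s : t) ∈ ℙ¹`. -/
def w (D : ScrollData K N n a) (i : Fin n) (s t : K) : Fin (N + 1) → K :=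
  ∑ j : Fin (a i + 1), (s ^ (a i - (j : ℕ)) * t ^ (j : ℕ)) • D.v i j

/-- The ruling of the scroll over the parameter `(s : t) ∈ ℙ¹`:
the linear span of the points of the directrix curves over `(s : t)`. -/
def ruling (D : ScrollData K N n a) (s t : K) : Set (PS K N) :=
  linSet (Submodule.span K (Set.range fun i => D.w i s t))

/-- The scroll itself: the union of its rulings. -/
def carrier (D : ScrollData K N n a) : Set (PS K N) :=
  ⋃ (s : K) (t : K) (_ : (s, t) ≠ (0, 0)), D.ruling s t

/-- A line section of the scroll: a line contained in the scroll meeting each ruling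
in exactly one point (a section of the scroll map `φ`). -/
def IsLineSection (D : ScrollData K N n a) (L : Set (PS K N)) : Prop :=
  IsLine L ∧ L ⊆ D.carrier ∧
    ∀ s t : K, (s, t) ≠ (0, 0) → ∃! x, x ∈ L ∩ D.ruling s t

/-- The subscroll `S(1̲)` swept out by the line sections, i.e. the subscroll
corresponding to the indices with `a i = 1`. -/
def sub1 (D : ScrollData K N n a) : Set (PS K N) :=
  ⋃ (s : K) (t : K) (_ : (s, t) ≠ (0, 0)),
    linSet (Submodule.span K
      (Set.range fun i : { i : Fin n // a i = 1 } => D.w i.1 s t))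

/-- The subscroll `S(2̲)` corresponding to the indices with `a i = 2`. -/
def sub2 (D : ScrollData K N n a) : Set (PS K N) :=
  ⋃ (s : K) (t : K) (_ : (s, t) ≠ (0, 0)),
    linSet (Submodule.span K
      (Set.range fun i : { i : Fin n // a i = 2 } => D.w i.1 s t))

/-- The Segre variety `Δ = ⋃_β ⟨C_β⟩ ≅ ℙ² × ℙ^{m-k-1}`: the union of the planes of
the conic sections `C_β` of the subscroll `S(2̲)`. -/
def delta (D : ScrollData K N n a) : Set (PS K N) :=
  ⋃ (β : { i : Fin n // a i = 2 } → K) (_ : β ≠ 0),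
    linSet (Submodule.span K (Set.range fun j : Fin 3 =>
      ∑ i : { i : Fin n // a i = 2 }, β i •
        D.v i.1 ⟨(j : ℕ), by have h1 := i.2; have h2 := j.isLt; omega⟩))

end ScrollData

/-- The data of a (possibly singular) rational normal scroll in `ℙ^N` with vertex of
projective dimension `hv - 1` (empty vertex when `hv = 0`, i.e. a smooth scroll):
a cone over the smooth rational normal scroll `base`, with vertex spanned by the
vectors `zv`, the whole configuration being linearly independent and spanning `ℙ^N`. -/
structure ConeScroll (K : Type*) [Field K] (N n : ℕ) (a : Fin n → ℕ) (hv : ℕ) where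
  zv : Fin hv → (Fin (N + 1) → K)
  base : ScrollData K N n a
  indep : LinearIndependent K
    (Sum.elim zv fun q : (i : Fin n) × Fin (a i + 1) => base.v q.1 q.2)
  total : N + 1 = hv + ∑ i, (a i + 1)

namespace ConeScroll

variable {n hv : ℕ} {a : Fin n → ℕ}

/-- The vertex `Vert(X̃)` of the cone. -/
def vertex (C : ConeScroll K N n a hv) : Set (PS K N) :=
  linSet (Submodule.span K (Set.range C.zv))

/-- The linear span `⟨X̃₀⟩` of the smooth base scroll. -/
def baseSpan (C : ConeScroll K N n a hv) : Set (PS K N) :=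
  projSpan C.base.carrier

/-- The scroll `X̃ = Join(Vert(X̃), X̃₀)` itself. -/
def carrier (C : ConeScroll K N n a hv) : Set (PS K N) :=
  join C.vertex C.base.carrier

/-- `Σ_p(X̃) = 2·Vert(X̃)`: the secant locus is (set-theoretically) the vertex,
with double structure. -/
def SLempty (C : ConeScroll K N n a hv) (p : PS K N) : Prop :=
  secLocus C.carrier p = C.vertex

/-- `Σ_p(X̃) = Join(Vert(X̃), {x, y})` for two distinct points `x, y` of `⟨X̃₀⟩`. -/
def SLpair (C : ConeScroll K N n a hv) (p : PS K N) : Prop :=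
  ∃ x y : PS K N, x ∈ C.baseSpan ∧ y ∈ C.baseSpan ∧ x ≠ y ∧
    secLocus C.carrier p = join C.vertex {x, y}

/-- `Σ_p(X̃) = 2⟨Vert(X̃), x⟩` for a point `x` of a line `L ⊆ ⟨X̃₀⟩`. -/
def SLdouble (C : ConeScroll K N n a hv) (p : PS K N) : Prop :=
  ∃ L : Set (PS K N), IsLine L ∧ L ⊆ C.baseSpan ∧ ∃ x ∈ L,
    secLocus C.carrier p = projSpan (C.vertex ∪ {x})

/-- `Σ_p(X̃) = Join(Vert(X̃), L ∪ L')` for two distinct coplanar lines `L, L' ⊆ ⟨X̃₀⟩`. -/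
def SLlines (C : ConeScroll K N n a hv) (p : PS K N) : Prop :=
  ∃ L L' : Set (PS K N), IsLine L ∧ IsLine L' ∧ L ≠ L' ∧
    (∃ Pl : Set (PS K N), IsPlane Pl ∧ L ⊆ Pl ∧ L' ⊆ Pl) ∧
    L ⊆ C.baseSpan ∧ L' ⊆ C.baseSpan ∧
    secLocus C.carrier p = join C.vertex (L ∪ L')

/-- `Σ_p(X̃) = Join(Vert(X̃), V)` for a smooth plane conic `V ⊆ ⟨X̃₀⟩`. -/
def SLconic (C : ConeScroll K N n a hv) (p : PS K N) : Prop :=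
  ∃ V : Set (PS K N), IsSmoothConic V ∧ V ⊆ C.baseSpan ∧
    secLocus C.carrier p = join C.vertex V

/-- `Σ_p(X̃) = Join(Vert(X̃), W)` for a smooth quadric surface `W ⊆ ⟨X̃₀⟩`. -/
def SLquadric (C : ConeScroll K N n a hv) (p : PS K N) : Prop :=
  ∃ W : Set (PS K N), IsSmoothQuadricSurface W ∧ W ⊆ C.baseSpan ∧
    secLocus C.carrier p = join C.vertex W

end ConeScroll

/-- The homogeneous vanishing ideal of a set of projective points. -/
def vanishingIdeal (S : Set (PS K N)) : Ideal (MvPolynomial (Fin (N + 1)) K) where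
  carrier := vanishing S
  add_mem' := by
    intro f g hf hg v hv
    simp [map_add, hf v hv, hg v hv]
  zero_mem' := by intro v hv; simp
  smul_mem' := by
    intro c f hf v hv
    simp [smul_eq_mul, hf v hv]

/-- `rs` is a regular sequence on `R/I` (expressed without passing to the quotient):
the sequence stays proper modulo `I` and each entry is a nonzerodivisor modulo
`I` together with the previous entries. -/
def IsRegModulo {R : Type*} [CommRing R] (I : Ideal R) (rs : List R) : Prop :=
  (I ⊔ Ideal.span { x | x ∈ rs } ≠ ⊤) ∧
  ∀ (i : ℕ) (h : i < rs.length) (y : R),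
    rs.get ⟨i, h⟩ * y ∈ I ⊔ Ideal.span { x | x ∈ rs.take i } →
    y ∈ I ⊔ Ideal.span { x | x ∈ rs.take i }

/-- `S ⊆ ℙ^N` is arithmetically Cohen–Macaulay: its homogeneous coordinate ring
admits a regular sequence, inside the irrelevant maximal ideal, of length equal to
its Krull dimension. -/
def IsACM (S : Set (PS K N)) : Prop :=
  ∃ rs : List (MvPolynomial (Fin (N + 1)) K),
    (∀ f ∈ rs, f ∈ Ideal.span
      (Set.range (MvPolynomial.X : Fin (N + 1) → MvPolynomial (Fin (N + 1)) K))) ∧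
    IsRegModulo (vanishingIdeal S) rs ∧
    ((rs.length : ℕ∞) : WithBot ℕ∞) =
      ringKrullDim (MvPolynomial (Fin (N + 1)) K ⧸ vanishingIdeal S)

/-- The image of a subset of `ℙ^N` under the linear projection induced by a linear
map `T` on homogeneous coordinates. -/
def projImage {M : ℕ} (T : (Fin (N + 1) → K) →ₗ[K] (Fin (M + 1) → K))
    (X : Set (PS K N)) : Set (PS K M) :=
  { y | ∃ x ∈ X, y.submodule = Submodule.map T x.submodule }

end SecantLoci

/-!
Every point `x` of a linear secant locus `Σ_p` is a point of tangency from `p`: a secant line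
through `p` meeting `X` twice would lie in `Σ_p`, putting `p` on `X`.

In coordinates `y_{i,j}` adapted to the directrices, `X` is cut out by the `2 × 2` minors
`y_{i,j} y_{i',j'+1} - y_{i,j+1} y_{i',j'}`. If `p ∉ X` is tangent to `X` at a point `x` of the
ruling over `(s : t)`, the polars of these quadrics give a `ν ≠ 0` with `x_{i,j} = ν s m_{i,j}`
and `x_{i,j+1} = ν t m_{i,j}`, where `m_{i,j} = t p_{i,j} - s p_{i,j+1}`. So distinct points of
tangency `x_k` lie on distinct rulings `(s_k : t_k)`; let `ν_k` be their scalars. A relation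
`∑ g_k x_k = 0` among three of them makes `p` satisfy `B p_{i,j} = A p_{i,j+1}` and
`C p_{i,j} = B p_{i,j+1}`, where `(A, B, C) = ∑ g_k ν_k (s_k², s_k t_k, t_k²)`. As `p ∉ X`, it
lies on no ruling `(A : B)` or `(B : C)`, so `A = B = C = 0`, and the three distinct points
`(s_k² : s_k t_k : t_k²)` of the conic force `g = 0`. But a line contains three distinct
collinear points, so `Σ_p` is not a linear space of positive dimension.
-/

namespace SecantLoci

open Function

section

variable {K : Type*} [Field K] {N : ℕ}

theorem eq_zero_of_pair_mul_eq_zero {s t z : K} (hst : (s, t) ≠ (0, 0))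
    (hs : s * z = 0) (ht : t * z = 0) : z = 0 := by
  by_contra hz
  exact hst (by simp_all)

theorem veronese_coeffs_eq_zero {s t β : Fin 3 → K}
    (hst : ∀ k l, k ≠ l → s k * t l - t k * s l ≠ 0)
    (h₁ : ∑ k, β k * s k ^ 2 = 0) (h₂ : ∑ k, β k * (s k * t k) = 0)
    (h₃ : ∑ k, β k * t k ^ 2 = 0) : β = 0 := by
  simp only [Fin.sum_univ_three] at h₁ h₂ h₃
  have h01 := hst 0 1 (by decide)
  have h02 := hst 0 2 (by decide)
  have h12 := hst 1 2 (by decide)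
  funext k
  fin_cases k
  · have h : β 0 * ((s 0 * t 1 - t 0 * s 1) * (s 0 * t 2 - t 0 * s 2)) = 0 := by
      linear_combination t 1 * t 2 * h₁ - (t 1 * s 2 + s 1 * t 2) * h₂ + s 1 * s 2 * h₃
    exact (mul_eq_zero.1 h).resolve_right (mul_ne_zero h01 h02)
  · have h : β 1 * ((s 0 * t 1 - t 0 * s 1) * (s 1 * t 2 - t 1 * s 2)) = 0 := by
      linear_combination -(t 0 * t 2 * h₁ - (t 0 * s 2 + s 0 * t 2) * h₂ + s 0 * s 2 * h₃)
    exact (mul_eq_zero.1 h).resolve_right (mul_ne_zero h01 h12)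
  · have h : β 2 * ((s 0 * t 2 - t 0 * s 2) * (s 1 * t 2 - t 1 * s 2)) = 0 := by
      linear_combination t 0 * t 1 * h₁ - (t 0 * s 1 + s 0 * t 1) * h₂ + s 0 * s 1 * h₃
    exact (mul_eq_zero.1 h).resolve_right (mul_ne_zero h02 h12)

theorem exists_eq_mul_monomial_of_minors {s t : K} (hst : (s, t) ≠ (0, 0)) {m : ℕ} {y : ℕ → K}
    (hy : ∀ j < m, t * y j - s * y (j + 1) = 0) :
    ∃ c, ∀ j ≤ m, y j = c * (s ^ (m - j) * t ^ j) := by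
  by_cases hs : s = 0
  · have ht : t ≠ 0 := fun h => hst (by rw [hs, h])
    refine ⟨y m / t ^ m, fun j hj => ?_⟩
    rcases hj.lt_or_eq with hj | rfl
    · have h := hy j hj
      rw [hs, zero_mul, sub_zero, mul_eq_zero] at h
      rw [h.resolve_left ht, hs, zero_pow (by omega), zero_mul, mul_zero]
    · field_simp
      simp
  · have hgeom : ∀ j ≤ m, s ^ j * y j = t ^ j * y 0 := by
      intro j hj
      induction j with
      | zero => simp
      | succ j ih =>
        linear_combination -s ^ j * hy j (by omega) + t * ih (by omega)
    refine ⟨y 0 / s ^ m, fun j hj => ?_⟩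
    have hm : s ^ m = s ^ (m - j) * s ^ j := by rw [← pow_add, Nat.sub_add_cancel hj]
    rw [div_mul_eq_mul_div, eq_div_iff (pow_ne_zero _ hs), hm]
    linear_combination s ^ (m - j) * hgeom j hj

theorem pow_sub_eq_mul_pow_sub_succ (s : K) {m j : ℕ} (h : j < m) :
    s ^ (m - j) = s * s ^ (m - (j + 1)) := by
  rw [← pow_succ']
  congr 1
  omega

theorem mem_linSet_iff {W : Submodule K (Fin (N + 1) → K)} {x : PS K N} :
    x ∈ linSet W ↔ x.rep ∈ W := by
  rw [linSet, Set.mem_ofPred_eq, submodule_eq, Submodule.span_singleton_le_iff_mem]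

theorem mk_mem_linSet_iff {W : Submodule K (Fin (N + 1) → K)} {v : Fin (N + 1) → K}
    (hv : v ≠ 0) : mk K v hv ∈ linSet W ↔ v ∈ W := by
  rw [linSet, Set.mem_ofPred_eq, submodule_mk, Submodule.span_singleton_le_iff_mem]

theorem linSet_mono {V W : Submodule K (Fin (N + 1) → K)} (h : V ≤ W) : linSet V ⊆ linSet W :=
  fun _ hx => le_trans hx h

theorem IsLine.subset_linSet {L : Set (PS K N)} (hL : IsLine L) {y z : PS K N} (hy : y ∈ L)
    (hz : z ∈ L) (hyz : y ≠ z) {W : Submodule K (Fin (N + 1) → K)} (hyW : y ∈ linSet W)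
    (hzW : z ∈ linSet W) : L ⊆ linSet W := by
  obtain ⟨V, hV, rfl⟩ := hL
  rw [mem_linSet_iff] at hy hz hyW hzW
  have hVyz := line_unique' y.rep_nonzero z.rep_nonzero (linearIndependent_pair_iff_ne.2 hyz)
    V hV hy hz
  refine linSet_mono (hVyz ▸ Submodule.span_le.2 ?_)
  rintro _ (rfl | rfl)
  exacts [hyW, hzW]

theorem mem_tangentSpace_of_secLocus_eq_linSet {X : Set (PS K N)} {p x : PS K N}
    {W : Submodule K (Fin (N + 1) → K)} (hp : p ∉ X) (hW : secLocus X p = linSet W)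
    (hx : x ∈ secLocus X p) : p ∈ tangentSpace X x := by
  obtain ⟨hxX, hx | hx⟩ := hx
  · exact absurd (Set.mem_singleton_iff.1 hx ▸ hxX) hp
  obtain ⟨L, ⟨⟨hL, hsec⟩, hpL⟩, hxL⟩ := Set.mem_iUnion₂.1 hx
  have hXL : X ∩ L ⊆ linSet W := fun y hy =>
    hW ▸ ⟨hy.1, Or.inr (Set.mem_iUnion₂.2 ⟨L, ⟨⟨hL, hsec⟩, hpL⟩, hy.2⟩)⟩
  have hunique : ∀ y ∈ X ∩ L, ∀ z ∈ X ∩ L, y = z := by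
    intro y hy z hz
    by_contra hyz
    have hpW := hL.subset_linSet hy.2 hz.2 hyz (hXL hy) (hXL hz) hpL
    exact hp (hW ▸ hpW).1
  obtain ⟨y, hy, z, hz, hyz⟩ | ⟨q, hq, hLq⟩ := hsec
  · exact absurd (hunique y hy z hz) hyz
  · exact hunique q hq x ⟨hxX, hxL⟩ ▸ hLq hpL

theorem exists_three_dependent_mem_linSet {W : Submodule K (Fin (N + 1) → K)}
    (hW : 2 ≤ Module.finrank K W) :
    ∃ x : Fin 3 → PS K N, Injective x ∧ (∀ k, x k ∈ linSet W) ∧ Dependent x := by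
  obtain ⟨e, he⟩ := exists_linearIndependent_of_le_finrank hW
  have he' : LinearIndependent K ![(e 0 : Fin (N + 1) → K), e 1] := by
    have := he.map' W.subtype W.ker_subtype
    rwa [show ⇑W.subtype ∘ e = ![(e 0 : Fin (N + 1) → K), e 1] by
      funext k; fin_cases k <;> rfl] at this
  let α : Fin 3 → K := ![1, 0, 1]
  let β : Fin 3 → K := ![0, 1, 1]
  let f : Fin 3 → Fin (N + 1) → K := fun k => α k • (e 0 : Fin (N + 1) → K) + β k • e 1
  have hpair : ∀ k l, k ≠ l → LinearIndependent K ![f k, f l] := by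
    intro k l hkl
    refine LinearIndependent.pair_add_smul_add_smul_iff _ _ _ _ |>.2 ⟨he', ?_⟩
    fin_cases k <;> fin_cases l <;> simp_all [α, β]
  have hf : ∀ k, f k ≠ 0 := fun k => (hpair k (k + 1) (by fin_cases k <;> decide)).ne_zero 0
  refine ⟨fun k => mk K (f k) (hf k), fun k l hxkl => ?_, fun k => ?_, Dependent.mk f hf ?_⟩
  · by_contra hkl
    exact (independent_pair_iff_ne _ _).1
      ((independent_mk_iff_LinearIndependent _ _).2 (hpair k l hkl)) hxkl
  · rw [mk_mem_linSet_iff]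
    exact W.add_mem (W.smul_mem _ (e 0).2) (W.smul_mem _ (e 1).2)
  · rw [Fintype.linearIndependent_iff]
    intro h
    have := h ![1, 1, -1] (by simp [Fin.sum_univ_three, f, α, β]; abel) 0
    simp at this

theorem dual_apply_eq_sum (φ : Module.Dual K (Fin (N + 1) → K)) (y : Fin (N + 1) → K) :
    φ y = ∑ k, y k * φ (Pi.single k 1) := by
  conv_lhs => rw [← Finset.univ_sum_single y, map_sum]
  refine Finset.sum_congr rfl fun k _ => ?_
  rw [← smul_eq_mul, ← map_smul, ← Pi.single_smul, smul_eq_mul, mul_one]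

def linearForm (φ : Module.Dual K (Fin (N + 1) → K)) : MvPolynomial (Fin (N + 1)) K :=
  ∑ k, C (φ (Pi.single k 1)) * X k

theorem eval_linearForm (φ : Module.Dual K (Fin (N + 1) → K)) (y : Fin (N + 1) → K) :
    eval y (linearForm φ) = φ y := by
  simp [linearForm, dual_apply_eq_sum φ y, mul_comm]

theorem pderiv_linearForm (φ : Module.Dual K (Fin (N + 1) → K)) (k : Fin (N + 1)) :
    pderiv k (linearForm φ) = C (φ (Pi.single k 1)) := by
  simp [linearForm, pderiv_X, Pi.single_apply]

theorem sum_mul_eval_pderiv_linearForm_mul (φ ψ : Module.Dual K (Fin (N + 1) → K))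
    (y x : Fin (N + 1) → K) :
    ∑ k, y k * eval x (pderiv k (linearForm φ * linearForm ψ)) = φ y * ψ x + φ x * ψ y := by
  simp only [Derivation.leibniz, pderiv_linearForm, map_add, smul_eq_mul, eval_C, eval_mul,
    eval_linearForm]
  rw [dual_apply_eq_sum φ y, dual_apply_eq_sum ψ y, Finset.sum_mul, Finset.mul_sum,
    ← Finset.sum_add_distrib]
  exact Finset.sum_congr rfl fun k _ => by ring

variable {n : ℕ} {a : Fin n → ℕ}

/-- The coordinate `y_{i,j}` with respect to a basis indexed like the directrix vectors
`v i j`; junk value `0` when `a i < j`. -/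
def blockCoord (B : Module.Basis ((i : Fin n) × Fin (a i + 1)) K (Fin (N + 1) → K))
    (i : Fin n) (j : ℕ) : Module.Dual K (Fin (N + 1) → K) :=
  if h : j ≤ a i then B.coord ⟨i, ⟨j, Nat.lt_succ_of_le h⟩⟩ else 0

def rulingMinor (B : Module.Basis ((i : Fin n) × Fin (a i + 1)) K (Fin (N + 1) → K))
    (s t : K) (y : Fin (N + 1) → K) (i : Fin n) (j : ℕ) : K :=
  t * blockCoord B i j y - s * blockCoord B i (j + 1) y

def minorQuadric (B : Module.Basis ((i : Fin n) × Fin (a i + 1)) K (Fin (N + 1) → K))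
    (i : Fin n) (j : ℕ) (i' : Fin n) (j' : ℕ) : MvPolynomial (Fin (N + 1)) K :=
  linearForm (blockCoord B i j) * linearForm (blockCoord B i' (j' + 1)) -
    linearForm (blockCoord B i (j + 1)) * linearForm (blockCoord B i' j')

variable {B : Module.Basis ((i : Fin n) × Fin (a i + 1)) K (Fin (N + 1) → K)}

theorem blockCoord_of_le {i : Fin n} {j : ℕ} (h : j ≤ a i) :
    blockCoord B i j = B.coord ⟨i, ⟨j, Nat.lt_succ_of_le h⟩⟩ :=
  dif_pos h

variable (B) in
theorem ext_blockCoord {y z : Fin (N + 1) → K}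
    (h : ∀ i, ∀ j ≤ a i, blockCoord B i j y = blockCoord B i j z) : y = z :=
  B.ext_elem fun ⟨i, j⟩ => by
    simpa [blockCoord_of_le (Nat.le_of_lt_succ j.2)] using h i j (Nat.le_of_lt_succ j.2)

variable (B) in
theorem eq_of_blockCoord_lt (ha : ∀ i, 1 ≤ a i) {y z : Fin (N + 1) → K}
    (h : ∀ i, ∀ j < a i, blockCoord B i j y = blockCoord B i j z ∧
      blockCoord B i (j + 1) y = blockCoord B i (j + 1) z) : y = z := by
  refine ext_blockCoord B fun i j hj => ?_
  rcases hj.lt_or_eq with hj | rfl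
  · exact (h i j hj).1
  · have := (h i (a i - 1) (by have := ha i; omega)).2
    rwa [Nat.sub_add_cancel (ha i)] at this

theorem sum_mul_eval_pderiv_minorQuadric (i : Fin n) (j : ℕ) (i' : Fin n) (j' : ℕ)
    (y x : Fin (N + 1) → K) :
    ∑ k, y k * eval x (pderiv k (minorQuadric B i j i' j')) =
      blockCoord B i j y * blockCoord B i' (j' + 1) x +
        blockCoord B i j x * blockCoord B i' (j' + 1) y -
      (blockCoord B i (j + 1) y * blockCoord B i' j' x +
        blockCoord B i (j + 1) x * blockCoord B i' j' y) := by
  simp only [minorQuadric, map_sub, mul_sub, Finset.sum_sub_distrib,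
    sum_mul_eval_pderiv_linearForm_mul]

namespace ScrollData

variable (D : ScrollData K N n a)

theorem sum_smul_w_eq (hB : ∀ q, B q = D.v q.1 q.2) (c : Fin n → K) (s t : K) :
    ∑ i, c i • D.w i s t = ∑ q, (c q.1 * (s ^ (a q.1 - q.2) * t ^ (q.2 : ℕ))) • B q := by
  simp only [ScrollData.w, Finset.smul_sum, smul_smul, hB, Fintype.sum_sigma]

theorem blockCoord_sum_smul_w (hB : ∀ q, B q = D.v q.1 q.2) (c : Fin n → K) (s t : K)
    {i : Fin n} {j : ℕ} (hj : j ≤ a i) :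
    blockCoord B i j (∑ i', c i' • D.w i' s t) = c i * (s ^ (a i - j) * t ^ j) := by
  rw [D.sum_smul_w_eq hB, blockCoord_of_le hj, Module.Basis.coord_apply, B.repr_sum_self]

theorem mem_span_w_iff_blockCoord (hB : ∀ q, B q = D.v q.1 q.2) {s t : K}
    {y : Fin (N + 1) → K} :
    y ∈ Submodule.span K (Set.range fun i => D.w i s t) ↔
      ∃ c : Fin n → K, ∀ i, ∀ j ≤ a i, blockCoord B i j y = c i * (s ^ (a i - j) * t ^ j) := by
  rw [Submodule.mem_span_range_iff_exists_fun]
  refine ⟨fun ⟨c, hc⟩ => ⟨c, fun i j hj => hc ▸ D.blockCoord_sum_smul_w hB c s t hj⟩,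
    fun ⟨c, hc⟩ => ⟨c, ext_blockCoord B fun i j hj => ?_⟩⟩
  rw [D.blockCoord_sum_smul_w hB c s t hj, hc i j hj]

theorem mem_span_w_iff_rulingMinor (hB : ∀ q, B q = D.v q.1 q.2) {s t : K}
    (hst : (s, t) ≠ (0, 0)) {y : Fin (N + 1) → K} :
    y ∈ Submodule.span K (Set.range fun i => D.w i s t) ↔
      ∀ i, ∀ j < a i, rulingMinor B s t y i j = 0 := by
  rw [D.mem_span_w_iff_blockCoord hB]
  constructor
  · rintro ⟨c, hc⟩ i j hj
    rw [rulingMinor, hc i j hj.le, hc i (j + 1) hj, pow_sub_eq_mul_pow_sub_succ s hj, pow_succ]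
    ring
  · intro h
    choose c hc using fun i => exists_eq_mul_monomial_of_minors hst (h i)
    exact ⟨c, hc⟩

theorem mem_span_w_of_cross_eq_zero (hB : ∀ q, B q = D.v q.1 q.2) {s t s' t' : K}
    (hst : (s, t) ≠ (0, 0)) (hst' : (s', t') ≠ (0, 0)) (hcross : s * t' - t * s' = 0)
    {y : Fin (N + 1) → K} (hy : y ∈ Submodule.span K (Set.range fun i => D.w i s' t')) :
    y ∈ Submodule.span K (Set.range fun i => D.w i s t) := by
  rw [D.mem_span_w_iff_rulingMinor hB hst]
  rw [D.mem_span_w_iff_rulingMinor hB hst'] at hy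
  intro i j hj
  have h := hy i j hj
  simp only [rulingMinor] at h ⊢
  refine eq_zero_of_pair_mul_eq_zero hst' ?_ ?_
  · linear_combination s * h - blockCoord B i j y * hcross
  · linear_combination t * h - blockCoord B i (j + 1) y * hcross

theorem mk_mem_carrier_iff {v : Fin (N + 1) → K} (hv : v ≠ 0) :
    Projectivization.mk K v hv ∈ D.carrier ↔
      ∃ s t : K, (s, t) ≠ (0, 0) ∧ v ∈ Submodule.span K (Set.range fun i => D.w i s t) := by
  simp only [ScrollData.carrier, ScrollData.ruling, Set.mem_iUnion, mk_mem_linSet_iff,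
    exists_prop]

theorem mem_carrier_iff {x : PS K N} :
    x ∈ D.carrier ↔
      ∃ s t : K, (s, t) ≠ (0, 0) ∧ x.rep ∈ Submodule.span K (Set.range fun i => D.w i s t) := by
  rw [← D.mk_mem_carrier_iff x.rep_nonzero, mk_rep]

theorem minorQuadric_mem_vanishing (hB : ∀ q, B q = D.v q.1 q.2) {i i' : Fin n} {j j' : ℕ}
    (hj : j < a i) (hj' : j' < a i') : minorQuadric B i j i' j' ∈ vanishing D.carrier := by
  intro v hv
  simp only [minorQuadric, map_sub, map_mul, eval_linearForm]
  by_cases hv0 : v = 0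
  · simp [hv0]
  obtain ⟨s, t, -, hspan⟩ := (D.mk_mem_carrier_iff hv0).1 (hv hv0)
  obtain ⟨c, hc⟩ := (D.mem_span_w_iff_blockCoord hB).1 hspan
  rw [hc i j hj.le, hc i (j + 1) hj, hc i' j' hj'.le, hc i' (j' + 1) hj',
    pow_sub_eq_mul_pow_sub_succ s hj, pow_sub_eq_mul_pow_sub_succ s hj', pow_succ, pow_succ]
  ring

theorem exists_blockCoord_eq_of_mem_tangentSpace (hB : ∀ q, B q = D.v q.1 q.2)
    (ha : ∀ i, 1 ≤ a i) {p x : PS K N} {s t : K} (hst : (s, t) ≠ (0, 0))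
    (hp : p.rep ∉ Submodule.span K (Set.range fun i => D.w i s t))
    (hx : x.rep ∈ Submodule.span K (Set.range fun i => D.w i s t))
    (hT : p ∈ tangentSpace D.carrier x) :
    ∃ ν : K, ν ≠ 0 ∧ ∀ i, ∀ j < a i,
      blockCoord B i j x.rep = ν * (s * rulingMinor B s t p.rep i j) ∧
        blockCoord B i (j + 1) x.rep = ν * (t * rulingMinor B s t p.rep i j) := by
  obtain ⟨c, hc⟩ := (D.mem_span_w_iff_blockCoord hB).1 hx
  set m : Fin n → ℕ → K := fun i j => c i * (s ^ (a i - (j + 1)) * t ^ j)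
  set d := rulingMinor B s t p.rep
  have hxm : ∀ i, ∀ j < a i,
      blockCoord B i j x.rep = s * m i j ∧ blockCoord B i (j + 1) x.rep = t * m i j := by
    intro i j hj
    rw [hc i j hj.le, hc i (j + 1) hj, pow_sub_eq_mul_pow_sub_succ s hj, pow_succ]
    constructor <;> ring
  have hmd : ∀ i, ∀ j < a i, ∀ i', ∀ j' < a i', m i' j' * d i j = m i j * d i' j' := by
    intro i j hj i' j' hj'
    have h := hT _ (D.minorQuadric_mem_vanishing hB hj hj')
    rw [sum_mul_eval_pderiv_minorQuadric, (hxm i j hj).1, (hxm i j hj).2, (hxm i' j' hj').1,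
      (hxm i' j' hj').2] at h
    simp only [d, rulingMinor]
    linear_combination h
  obtain ⟨i₀, j₀, hj₀, hd₀⟩ : ∃ i, ∃ j < a i, d i j ≠ 0 := by
    by_contra! h
    exact hp ((D.mem_span_w_iff_rulingMinor hB hst).2 h)
  have hm : ∀ i, ∀ j < a i, m i j = m i₀ j₀ / d i₀ j₀ * d i j := fun i j hj => by
    rw [div_mul_eq_mul_div, eq_div_iff hd₀]
    linear_combination hmd i₀ j₀ hj₀ i j hj
  refine ⟨m i₀ j₀ / d i₀ j₀, fun hν => x.rep_nonzero (eq_of_blockCoord_lt B ha fun i j hj => ?_),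
    fun i j hj => ?_⟩
  · simp [(hxm i j hj).1, (hxm i j hj).2, hm i j hj, hν]
  · rw [(hxm i j hj).1, (hxm i j hj).2, hm i j hj]
    constructor <;> ring

theorem cross_ne_zero_of_mem_tangentSpace (hB : ∀ q, B q = D.v q.1 q.2) (ha : ∀ i, 1 ≤ a i)
    {p x x' : PS K N} (hp : p ∉ D.carrier) (hxx' : x ≠ x') {s t s' t' : K}
    (hst : (s, t) ≠ (0, 0)) (hst' : (s', t') ≠ (0, 0))
    (hx : x.rep ∈ Submodule.span K (Set.range fun i => D.w i s t))
    (hx' : x'.rep ∈ Submodule.span K (Set.range fun i => D.w i s' t'))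
    (hT : p ∈ tangentSpace D.carrier x) (hT' : p ∈ tangentSpace D.carrier x') :
    s * t' - t * s' ≠ 0 := by
  intro hcross
  have hp' : p.rep ∉ Submodule.span K (Set.range fun i => D.w i s t) := fun h =>
    hp (D.mem_carrier_iff.2 ⟨s, t, hst, h⟩)
  obtain ⟨ν, hν, hxν⟩ := D.exists_blockCoord_eq_of_mem_tangentSpace hB ha hst hp' hx hT
  obtain ⟨ν', -, hx'ν⟩ := D.exists_blockCoord_eq_of_mem_tangentSpace hB ha hst hp'
    (D.mem_span_w_of_cross_eq_zero hB hst hst' hcross hx') hT'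
  have h : ν' • x.rep = ν • x'.rep := eq_of_blockCoord_lt B ha fun i j hj => by
    simp only [map_smul, smul_eq_mul, (hxν i j hj).1, (hxν i j hj).2, (hx'ν i j hj).1,
      (hx'ν i j hj).2]
    constructor <;> ring
  refine hxx' (Eq.symm ?_)
  rw [← x.mk_rep, ← x'.mk_rep, mk_eq_mk_iff']
  exact ⟨ν⁻¹ * ν', by rw [mul_smul, h, inv_smul_smul₀ hν]⟩

theorem eq_zero_of_rulingMinor_eq_zero (hB : ∀ q, B q = D.v q.1 q.2) {p : PS K N}
    (hp : p ∉ D.carrier) {α β γ : K}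
    (hαβ : ∀ i, ∀ j < a i, rulingMinor B α β p.rep i j = 0)
    (hβγ : ∀ i, ∀ j < a i, rulingMinor B β γ p.rep i j = 0) : α = 0 ∧ β = 0 ∧ γ = 0 := by
  have hruling : ∀ s t : K, (∀ i, ∀ j < a i, rulingMinor B s t p.rep i j = 0) →
      (s, t) = (0, 0) := fun s t h => by
    by_contra hst
    exact hp (D.mem_carrier_iff.2 ⟨s, t, hst, (D.mem_span_w_iff_rulingMinor hB hst).2 h⟩)
  simp only [Prod.mk.injEq] at hruling
  exact ⟨(hruling α β hαβ).1, (hruling α β hαβ).2, (hruling β γ hβγ).2⟩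

theorem independent_of_mem_tangentSpace (hB : ∀ q, B q = D.v q.1 q.2) (ha : ∀ i, 1 ≤ a i)
    {p : PS K N} (hp : p ∉ D.carrier) {x : Fin 3 → PS K N} (hx : Injective x)
    (hX : ∀ k, x k ∈ D.carrier) (hT : ∀ k, p ∈ tangentSpace D.carrier (x k)) :
    Independent x := by
  choose s t hst hmem using fun k => D.mem_carrier_iff.1 (hX k)
  have hp' : ∀ k, p.rep ∉ Submodule.span K (Set.range fun i => D.w i (s k) (t k)) := fun k h =>
    hp (D.mem_carrier_iff.2 ⟨_, _, hst k, h⟩)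
  choose ν hν hxν using fun k =>
    D.exists_blockCoord_eq_of_mem_tangentSpace hB ha (hst k) (hp' k) (hmem k) (hT k)
  rw [independent_iff, Fintype.linearIndependent_iff]
  intro g hg
  have hcoord : ∀ i j, ∑ k, g k * blockCoord B i j (x k).rep = 0 := fun i j => by
    simpa using congrArg (blockCoord B i j) hg
  have hαβ : ∀ i, ∀ j < a i, rulingMinor B (∑ k, g k * ν k * s k ^ 2)
      (∑ k, g k * ν k * (s k * t k)) p.rep i j = 0 := fun i j hj => by
    have h := hcoord i j
    simp only [Fin.sum_univ_three, (hxν _ i j hj).1, rulingMinor] at h ⊢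
    linear_combination h
  have hβγ : ∀ i, ∀ j < a i, rulingMinor B (∑ k, g k * ν k * (s k * t k))
      (∑ k, g k * ν k * t k ^ 2) p.rep i j = 0 := fun i j hj => by
    have h := hcoord i (j + 1)
    simp only [Fin.sum_univ_three, (hxν _ i j hj).2, rulingMinor] at h ⊢
    linear_combination h
  have hcross : ∀ k l, k ≠ l → s k * t l - t k * s l ≠ 0 := fun k l hkl =>
    D.cross_ne_zero_of_mem_tangentSpace hB ha hp (hx.ne hkl) (hst k) (hst l) (hmem k)
      (hmem l) (hT k) (hT l)
  obtain ⟨h₁, h₂, h₃⟩ := D.eq_zero_of_rulingMinor_eq_zero hB hp hαβ hβγ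
  have hgν := veronese_coeffs_eq_zero (β := fun k => g k * ν k) hcross h₁ h₂ h₃
  exact fun k => (mul_eq_zero.1 (congrFun hgν k)).resolve_right (hν k)

theorem exists_basis (hN : N + 1 = ∑ i, (a i + 1)) :
    ∃ B : Module.Basis ((i : Fin n) × Fin (a i + 1)) K (Fin (N + 1) → K),
      ∀ q, B q = D.v q.1 q.2 := by
  have hcard : Fintype.card ((i : Fin n) × Fin (a i + 1)) =
      Module.finrank K (Fin (N + 1) → K) := by
    simp [hN]
  exact ⟨.mk D.indep (D.indep.span_eq_top_of_card_eq_finrank' hcard).ge, fun q => by simp⟩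

end ScrollData

end

theorem secant_locus_not_double_linear_space_general {K : Type*} [Field K]
    {N n : ℕ} {a : Fin n → ℕ}
    (D : ScrollData K N n a) (ha : ∀ i, 1 ≤ a i)
    (htot : N + 1 = ∑ i, (a i + 1))
    (p : PS K N) (hp : p ∈ secVariety D.carrier \ D.carrier)
    (t : ℕ) (ht : 3 ≤ t) :
    ¬ ∃ E : Set (PS K N), IsLinearOfDim E (t - 2) ∧ secLocus D.carrier p = E := by
  rintro ⟨_, ⟨W, hW, rfl⟩, hE⟩
  obtain ⟨B, hB⟩ := D.exists_basis htot
  obtain ⟨x, hx, hxW, hdep⟩ := exists_three_dependent_mem_linSet (W := W) (by omega)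
  have hxE : ∀ k, x k ∈ secLocus D.carrier p := fun k => hE ▸ hxW k
  exact dependent_iff_not_independent.1 hdep <|
    D.independent_of_mem_tangentSpace hB ha hp.2 hx (fun k => (hxE k).1)
      fun k => mem_tangentSpace_of_secLocus_eq_linSet hp.2 hE (hxE k)

/-- If `X̃` is a smooth rational normal scroll of codimension at least 2,
`p ∈ Sec(X̃) \ X̃` and `Sec_p(X̃) = ℙ^{t-1}` with `t ≥ 3`, then the hyperquadric
`Σ_p(X̃) ⊆ ℙ^{t-1}` is not a double linear space; set-theoretically: its support
is not a linear subspace of dimension `t - 2`. -/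
theorem secant_locus_not_double_linear_space {K : Type*} [Field K] [IsAlgClosed K]
    {N n : ℕ} {a : Fin n → ℕ}
    (D : ScrollData K N n a) (ha : ∀ i, 1 ≤ a i)
    (htot : N + 1 = ∑ i, (a i + 1)) (hcodim : n + 2 ≤ N)
    (p : PS K N) (hp : p ∈ secVariety D.carrier \ D.carrier)
    (t : ℕ) (ht : 3 ≤ t)
    (hsec : IsLinearOfDim (secCone D.carrier p) (t - 1)) :
    ¬ ∃ E : Set (PS K N), IsLinearOfDim E (t - 2) ∧ secLocus D.carrier p = E :=
  secant_locus_not_double_linear_space_general D ha htot p hp t ht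

end SecantLoci
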